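/- Let C be a category with finite limits that admits coequalizers of equivalence relations, in which equivalence relations are effective and effective epimorphisms are stable under pullback. Then for any equivalence relation X₁ ⇉ X₀ with quotient q : X₀ → X₀/X₁, and any cospan X₀ → Z ← Y in C, the canonical map coeq(X₁ ×_Z Y ⇉ X₀ ×_Z Y) → (X₀/X₁) ×_Z Y is an isomorphism; i.e., quotients of equivalence relations are universal. -/

import Mathlib

/-! Since equivalence relations are effective, `(d₀, d₁)` is the kernel pair of its quotient `q`,
and `q`, being a coequalizer, is a regular epimorphism. Effective and regular epimorphisms agree
in a category with pullbacks, so `q` stays regular after base change along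
`X₀/X₁ ×_Z Y ⟶ X₀/X₁`; that base change is the comparison map `X₀ ×_Z Y ⟶ X₀/X₁ ×_Z Y`, and
base change also carries the kernel pair `(d₀, d₁)` of `q` to the kernel pair
`X₁ ×_Z Y ⇉ X₀ ×_Z Y` of the comparison map. A regular epimorphism is the coequalizer of its
kernel pair. -/

open CategoryTheory CategoryTheory.Limits

universe v u

variable (C : Type u) [Category.{v} C] [HasFiniteLimits C]

/-- An equivalence groupoid in `C`: a pair of objects with a monomorphism
`X₁ ⟶ X₀ ⨯ X₀` which is an internal equivalence relation. -/
structure EqGpd where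
  X₀ : C
  X₁ : C
  d₀ : X₁ ⟶ X₀
  d₁ : X₁ ⟶ X₀
  mono : Mono (prod.lift d₀ d₁)
  refl : ∀ (T : C) (x : T ⟶ X₀), ∃ h : T ⟶ X₁, h ≫ d₀ = x ∧ h ≫ d₁ = x
  symm : ∀ (T : C) (x y : T ⟶ X₀), (∃ h : T ⟶ X₁, h ≫ d₀ = x ∧ h ≫ d₁ = y) →
    ∃ h : T ⟶ X₁, h ≫ d₀ = y ∧ h ≫ d₁ = x
  trans : ∀ (T : C) (x y z : T ⟶ X₀),
    (∃ h : T ⟶ X₁, h ≫ d₀ = x ∧ h ≫ d₁ = y) →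
    (∃ h : T ⟶ X₁, h ≫ d₀ = y ∧ h ≫ d₁ = z) →
    ∃ h : T ⟶ X₁, h ≫ d₀ = x ∧ h ≫ d₁ = z

namespace EqGpd

variable {C}

/-- A morphism of equivalence groupoids. -/
@[ext]
structure Hom (A B : EqGpd C) where
  f₀ : A.X₀ ⟶ B.X₀
  f₁ : A.X₁ ⟶ B.X₁
  w₀ : f₁ ≫ B.d₀ = A.d₀ ≫ f₀
  w₁ : f₁ ≫ B.d₁ = A.d₁ ≫ f₀

instance : Category (EqGpd C) where
  Hom A B := Hom A B
  id A := ⟨𝟙 _, 𝟙 _, by simp, by simp⟩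
  comp {A B D} f g := ⟨f.f₀ ≫ g.f₀, f.f₁ ≫ g.f₁,
    by rw [Category.assoc, g.w₀, ← Category.assoc, f.w₀, Category.assoc],
    by rw [Category.assoc, g.w₁, ← Category.assoc, f.w₁, Category.assoc]⟩
  id_comp f := by apply Hom.ext <;> simp
  comp_id f := by apply Hom.ext <;> simp
  assoc f g h := by apply Hom.ext <;> simp

@[simp] lemma comp_f₀ {A B D : EqGpd C} (f : A ⟶ B) (g : B ⟶ D) :
    (f ≫ g).f₀ = f.f₀ ≫ g.f₀ := rfl

@[simp] lemma comp_f₁ {A B D : EqGpd C} (f : A ⟶ B) (g : B ⟶ D) :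
    (f ≫ g).f₁ = f.f₁ ≫ g.f₁ := rfl

@[simp] lemma id_f₀ (A : EqGpd C) : (𝟙 A : A ⟶ A).f₀ = 𝟙 A.X₀ := rfl

@[simp] lemma id_f₁ (A : EqGpd C) : (𝟙 A : A ⟶ A).f₁ = 𝟙 A.X₁ := rfl

/-- The homotopy relation on morphisms of equivalence groupoids. -/
def htpy : HomRel (EqGpd C) := fun {A B} f g =>
  ∃ h : A.X₀ ⟶ B.X₁, h ≫ B.d₀ = f.f₀ ∧ h ≫ B.d₁ = g.f₀

/-- The embedding of `C` into equivalence groupoids via diagonals. -/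
def disc : C ⥤ EqGpd C where
  obj X :=
    { X₀ := X
      X₁ := X
      d₀ := 𝟙 X
      d₁ := 𝟙 X
      mono := ⟨fun {Z} g h w => by
        have := congrArg (fun t => t ≫ (prod.fst : X ⨯ X ⟶ X)) w
        have e : prod.lift (𝟙 X) (𝟙 X) ≫ (prod.fst : X ⨯ X ⟶ X) = 𝟙 X := prod.lift_fst _ _
        simp only [Category.assoc] at this
        calc g = g ≫ (prod.lift (𝟙 X) (𝟙 X) ≫ (prod.fst : X ⨯ X ⟶ X)) := by rw [e, Category.comp_id]
          _ = h ≫ (prod.lift (𝟙 X) (𝟙 X) ≫ (prod.fst : X ⨯ X ⟶ X)) := this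
          _ = h := by rw [e, Category.comp_id]⟩
      refl := fun T x => ⟨x, by simp, by simp⟩
      symm := fun T x y ⟨h, h0, h1⟩ => ⟨h, by simpa using h1, by simpa using h0⟩
      trans := fun T x y z ⟨h, h0, h1⟩ ⟨k, k0, k1⟩ =>
        ⟨h, h0, by
          simp only [Category.comp_id] at h0 h1 k0 k1 ⊢
          rw [h1, ← k0]; exact k1⟩ }
  map {X Y} u := ⟨u, u, by simp, by simp⟩
  map_id X := by apply Hom.ext <;> simp
  map_comp f g := by apply Hom.ext <;> simp

end EqGpd

variable {C}

/-- `f` is an effective epimorphism: it is the coequalizer of its kernel pair. -/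
def IsEffectiveEpi {X Y : C} (f : X ⟶ Y) : Prop :=
  ∃ w : pullback.fst f f ≫ f = pullback.snd f f ≫ f,
    Nonempty (IsColimit (Cofork.ofπ f w))

section

variable {D : Type*} [Category D]

namespace CategoryTheory.IsKernelPair

variable {K X Y Y' Z : D} {a b : K ⟶ X} {f : X ⟶ Y}

theorem of_isIso_pullbackLift [HasPullback f f] {w : a ≫ f = b ≫ f}
    (hlift : IsIso (pullback.lift a b w)) : IsKernelPair f a b :=
  IsPullback.of_iso_pullback ⟨w⟩ (asIso (pullback.lift a b w)) (pullback.lift_fst _ _ _)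
    (pullback.lift_snd _ _ _)

theorem of_isColimit_cofork {f' : X ⟶ Y'} {w : a ≫ f = b ≫ f} {w' : a ≫ f' = b ≫ f'}
    (hk : IsKernelPair f a b) (hc : IsColimit (Cofork.ofπ f w))
    (hc' : IsColimit (Cofork.ofπ f' w')) : IsKernelPair f' a b := by
  have hf : f ≫ (hc.coconePointUniqueUpToIso hc').hom = f' :=
    hc.comp_coconePointUniqueUpToIso_hom hc' WalkingParallelPair.one
  rw [← hf]
  exact hk.comp_of_mono

theorem pullback_map (hk : IsKernelPair f a b) (p : Y ⟶ Z) (g : Y' ⟶ Z) [HasPullback p g]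
    [HasPullback (f ≫ p) g] [HasPullback (a ≫ f ≫ p) g] :
    IsKernelPair (pullback.map (f ≫ p) g p g f (𝟙 Y') (𝟙 Z) (by simp) (by simp))
      (pullback.map (a ≫ f ≫ p) g (f ≫ p) g a (𝟙 Y') (𝟙 Z) (by simp) (by simp))
      (pullback.map (a ≫ f ≫ p) g (f ≫ p) g b (𝟙 Y') (𝟙 Z) (by simp [hk.w_assoc])
        (by simp)) := by
  set π := pullback.map (f ≫ p) g p g f (𝟙 Y') (𝟙 Z) (by simp) (by simp)
  have hπ₁ : π ≫ pullback.fst p g = pullback.fst (f ≫ p) g ≫ f := pullback.lift_fst _ _ _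
  have hπ₂ : π ≫ pullback.snd p g = pullback.snd (f ≫ p) g := by
    simp [π, pullback.lift_snd]
  have hfst (s : PullbackCone π π) :
      (s.fst ≫ pullback.fst _ _) ≫ f = (s.snd ≫ pullback.fst _ _) ≫ f := by
    simpa [hπ₁] using s.condition =≫ pullback.fst p g
  have hsnd (s : PullbackCone π π) : s.fst ≫ pullback.snd _ _ = s.snd ≫ pullback.snd _ _ := by
    simpa [hπ₂] using s.condition =≫ pullback.snd p g
  refine ⟨⟨by ext <;> simp [hπ₁, hπ₂, pullback.lift_fst_assoc, pullback.lift_snd, hk.w]⟩,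
    ⟨PullbackCone.IsLimit.mk _ (fun s => pullback.lift
      (hk.lift (s.fst ≫ pullback.fst _ _) (s.snd ≫ pullback.fst _ _) (hfst s))
      (s.fst ≫ pullback.snd _ _) ?_) (fun s => ?_) (fun s => ?_) (fun s m hm₁ hm₂ => ?_)⟩⟩
  · simp [IsKernelPair.lift_fst_assoc, pullback.condition]
  · ext
    · simp [pullback.lift_fst, pullback.lift_fst_assoc, IsKernelPair.lift_fst]
    · simp [pullback.lift_snd]
  · ext
    · simp [pullback.lift_fst, pullback.lift_fst_assoc, IsKernelPair.lift_snd]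
    · simp [pullback.lift_snd, hsnd]
  · refine pullback.hom_ext (hk.hom_ext ?_ ?_) ?_
    · simpa [pullback.lift_fst] using hm₁ =≫ pullback.fst _ _
    · simpa [pullback.lift_fst] using hm₂ =≫ pullback.fst _ _
    · simpa [pullback.lift_snd] using hm₁ =≫ pullback.snd _ _

end CategoryTheory.IsKernelPair

theorem isPullback_pullbackMap {X Q Y Z : D} (q : X ⟶ Q) (p : Q ⟶ Z)
    (g : Y ⟶ Z) [HasPullback p g] [HasPullback (q ≫ p) g] :
    IsPullback (pullback.fst (q ≫ p) g)
      (pullback.map (q ≫ p) g p g q (𝟙 Y) (𝟙 Z) (by simp) (by simp)) q (pullback.fst p g) := by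
  refine IsPullback.of_bot ?_ (pullback.lift_fst _ _ _).symm (IsPullback.of_hasPullback p g)
  simpa [pullback.lift_snd] using IsPullback.of_hasPullback (q ≫ p) g

end

theorem isEffectiveEpi_iff_isRegularEpi {X Y : C} (f : X ⟶ Y) :
    IsEffectiveEpi f ↔ IsRegularEpi f :=
  ⟨fun ⟨_, ⟨hc⟩⟩ => isRegularEpi_of_regularEpi (regularEpiOfKernelPair f hc),
    fun _ => ⟨pullback.condition, ⟨(IsKernelPair.of_hasPullback f).toCoequalizer'⟩⟩⟩

theorem isStableUnderBaseChange_regularEpi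
    (hstab : ∀ {X Y Z : C} (f : X ⟶ Y) (g : Z ⟶ Y),
      IsEffectiveEpi f → IsEffectiveEpi (pullback.snd f g)) :
    (MorphismProperty.regularEpi C).IsStableUnderBaseChange where
  of_isPullback {_ _ _ _ f g _ _} sq hg := by
    rw [← sq.isoPullback_hom_snd]
    refine MorphismProperty.RespectsIso.precomp _ _ _ ?_
    rw [MorphismProperty.regularEpi_iff, ← isEffectiveEpi_iff_isRegularEpi]
    exact hstab g f ((isEffectiveEpi_iff_isRegularEpi g).2 hg)

/-- in a finitely complete category admitting coequalizers of
equivalence relations, in which equivalence relations are effective and effective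
epimorphisms are stable under pullback, quotients of equivalence relations are
universal: for an equivalence relation `X₁ ⇉ X₀` with quotient `q : X₀ ⟶ X₀/X₁` and a
cospan `X₀ → Z ← Y`, the canonical map
`coeq (X₁ ×_Z Y ⇉ X₀ ×_Z Y) ⟶ (X₀/X₁) ×_Z Y` is an isomorphism, i.e. the base change
of the quotient map is again the corresponding quotient. -/
theorem quotients_of_equivalence_relations_are_universal
    (heff : ∀ A : EqGpd C, ∃ (Q : C) (q : A.X₀ ⟶ Q) (w : A.d₀ ≫ q = A.d₁ ≫ q),
      Nonempty (IsColimit (Cofork.ofπ q w)) ∧ IsIso (pullback.lift A.d₀ A.d₁ w))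
    (hstab : ∀ {X Y Z : C} (f : X ⟶ Y) (g : Z ⟶ Y),
      IsEffectiveEpi f → IsEffectiveEpi (pullback.snd f g))
    (A : EqGpd C) (Q : C) (q : A.X₀ ⟶ Q) (w : A.d₀ ≫ q = A.d₁ ≫ q)
    (hc : IsColimit (Cofork.ofπ q w))
    (Z Y : C) (g : A.X₀ ⟶ Z) (h : Y ⟶ Z) (hg : A.d₀ ≫ g = A.d₁ ≫ g)
    (gbar : Q ⟶ Z) (hgbar : q ≫ gbar = g) :
    ∃ wκ : pullback.map (A.d₀ ≫ g) h g h A.d₀ (𝟙 Y) (𝟙 Z) (by simp) (by simp) ≫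
          pullback.map g h gbar h q (𝟙 Y) (𝟙 Z) (by rw [Category.comp_id, hgbar]) (by simp) =
        pullback.map (A.d₀ ≫ g) h g h A.d₁ (𝟙 Y) (𝟙 Z)
            (by rw [Category.comp_id, hg]) (by simp) ≫
          pullback.map g h gbar h q (𝟙 Y) (𝟙 Z) (by rw [Category.comp_id, hgbar]) (by simp),
      Nonempty (IsColimit (Cofork.ofπ
        (pullback.map g h gbar h q (𝟙 Y) (𝟙 Z)
          (by rw [Category.comp_id, hgbar]) (by simp)) wκ)) := by
  obtain ⟨Q', q', w', ⟨hc'⟩, hlift⟩ := heff A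
  have hker : IsKernelPair q A.d₀ A.d₁ :=
    (IsKernelPair.of_isIso_pullbackLift hlift).of_isColimit_cofork hc' hc
  subst hgbar
  have hπ := hker.pullback_map gbar h
  have : IsRegularEpi
      (pullback.map (q ≫ gbar) h gbar h q (𝟙 Y) (𝟙 Z) (by simp) (by simp)) :=
    (isStableUnderBaseChange_regularEpi hstab).of_isPullback (isPullback_pullbackMap q gbar h)
      (isRegularEpi_of_regularEpi (Cofork.IsColimit.regularEpi hc))
  exact ⟨hπ.w, ⟨hπ.toCoequalizer'⟩⟩
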